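/- Consider N₀ + N₁ bits a₁,…,a_{N₀+N₁} with exactly N₀ zeros and N₁ ones, partitioned uniformly at random into k = (N₀+N₁)/n ordered groups A₁,…,A_k each of size n (assuming n divides N₀+N₁). Let Yᵢ = ⊕_{a ∈ Aᵢ} a be the parity of the bits in group Aᵢ. Then for any δ > 0 there exists N' such that whenever min{N₀, N₁} ≥ N', the covariance satisfies Cov[Yᵢ, Yⱼ] ≤ δ · (E[Y₁])² for all i ≠ j. -/

import Mathlib

open Finset

noncomputable section

/-- Expectation of a real function of a uniformly random permutation of `Fin N`. -/
def permExp (N : ℕ) (f : Equiv.Perm (Fin N) → ℝ) : ℝ :=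
  (∑ σ : Equiv.Perm (Fin N), f σ) / (Fintype.card (Equiv.Perm (Fin N)) : ℝ)

/-- The parity indicator of group `i`: partition `Fin (k * n)` into `k` ordered groups of
size `n` according to a permutation `σ`, and record whether the bits of `a` in group `i`
have odd parity.  A uniformly random permutation induces a uniformly random ordered
partition into groups of size `n`. -/
def groupParity (k n : ℕ) (a : Fin (k * n) → ZMod 2) (i : Fin k)
    (σ : Equiv.Perm (Fin (k * n))) : ℝ :=
  if (∑ j : Fin n, a (σ (finProdFinEquiv (i, j)))) = 1 then 1 else 0

/-- Covariance of group parities under a uniformly random ordered partition. -/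
def parityCov (k n : ℕ) (a : Fin (k * n) → ZMod 2) (i j : Fin k) : ℝ :=
  permExp (k * n) (fun σ => groupParity k n a i σ * groupParity k n a j σ) -
    permExp (k * n) (groupParity k n a i) * permExp (k * n) (groupParity k n a j)

/-! Restricting a uniformly random permutation of `Fin N` to a fixed set of positions gives a
uniformly random injection, because the symmetric group acts transitively on injections. So
`E[Yᵢ] = S / N^(n)` and `E[YᵢYⱼ] = S₂ / N^(2n)` (falling factorials), where `S` counts the
injections `Fin n ↪ Fin N` that pick bits of odd parity and `S₂ ≤ S²` counts the pairs of such
injections with disjoint ranges. The bound therefore reduces to `(N^(n))² ≤ (1 + δ) N^(2n)`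
for large `N`, which holds since both sides are `N^(2n) (1 + o(1))`. -/

open Function Filter Topology

section Averaging

variable {G X : Type*} [Group G] [Fintype G] [MulAction G X] [Fintype X]
  [MulAction.IsPretransitive G X]

theorem MulAction.card_smul_sum_smul_eq_card_smul_sum {M : Type*} [AddCommMonoid M]
    (f : X → M) (x : X) :
    Fintype.card X • ∑ g : G, f (g • x) = Fintype.card G • ∑ y, f y := by
  have orbit_sum_const : ∀ y, ∑ g : G, f (g • y) = ∑ g : G, f (g • x) := by
    intro y
    obtain ⟨h, rfl⟩ := MulAction.exists_smul_eq G x y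
    exact Fintype.sum_equiv (Equiv.mulRight h) _ _ fun g => by simp [mul_smul]
  calc Fintype.card X • ∑ g : G, f (g • x) = ∑ y : X, ∑ g : G, f (g • y) := by
        simp [orbit_sum_const]
    _ = ∑ g : G, ∑ y, f (g • y) := Finset.sum_comm
    _ = ∑ g : G, ∑ y, f y := by
        congr! 1 with g
        exact Fintype.sum_equiv (MulAction.toPerm g) _ _ fun _ => rfl
    _ = Fintype.card G • ∑ y, f y := by simp

theorem MulAction.sum_smul_div_card_eq {K : Type*} [Semifield K] [CharZero K] (f : X → K)
    (x : X) :
    (∑ g : G, f (g • x)) / Fintype.card G = (∑ y, f y) / Fintype.card X := by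
  have hG : (Fintype.card G : K) ≠ 0 := by simp
  have hX : (Fintype.card X : K) ≠ 0 := by
    simpa using (Fintype.card_pos_iff.mpr ⟨x⟩).ne'
  rw [div_eq_div_iff hG hX]
  simpa [nsmul_eq_mul, mul_comm] using card_smul_sum_smul_eq_card_smul_sum (G := G) f x

end Averaging

instance Equiv.Perm.isPretransitive_embedding {α ι : Type*} [Finite ι] :
    MulAction.IsPretransitive (Equiv.Perm α) (ι ↪ α) :=
  ⟨Equiv.Perm.exists_smul_eq_embedding⟩

theorem permExp_comp_smul {N : ℕ} {ι : Type*} [Fintype ι] (f : (ι ↪ Fin N) → ℝ)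
    (e : ι ↪ Fin N) :
    permExp N (fun σ => f (σ • e)) = (∑ w, f w) / N.descFactorial (Fintype.card ι) := by
  rw [permExp, MulAction.sum_smul_div_card_eq, Fintype.card_embedding_eq, Fintype.card_fin]

theorem sum_mul_sum_embedding_le {ι κ X : Type*} [Fintype ι] [Fintype κ] [Fintype X]
    {g : (ι ↪ X) → ℝ} {h : (κ ↪ X) → ℝ} (hg : 0 ≤ g) (hh : 0 ≤ h) :
    ∑ u : ι ⊕ κ ↪ X, g (Embedding.inl.trans u) * h (Embedding.inr.trans u)
      ≤ (∑ v, g v) * ∑ w, h w := by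
  classical
  rw [Fintype.sum_mul_sum, ← Fintype.sum_prod_type',
    Fintype.sum_equiv Equiv.sumEmbeddingEquivProdEmbeddingDisjoint
      (fun u => g (Embedding.inl.trans u) * h (Embedding.inr.trans u))
      (fun p => g p.1.1 * h p.1.2) fun _ => rfl,
    (Finset.sum_subtype _ (fun p => Finset.mem_filter_univ p)
      fun p : (ι ↪ X) × (κ ↪ X) => g p.1 * h p.2).symm]
  exact Finset.sum_le_univ_sum_of_nonneg fun p => mul_nonneg (hg _) (hh _)

theorem eventually_add_pow_le (c : ℝ) (n : ℕ) {δ : ℝ} (hδ : 0 < δ) :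
    ∀ᶠ m : ℕ in atTop, ((m : ℝ) + c) ^ n ≤ (1 + δ) * (m : ℝ) ^ n := by
  have hlim : Tendsto (fun m : ℕ => (1 + c / m) ^ n) atTop (𝓝 1) := by
    simpa using ((tendsto_const_div_atTop_nhds_zero_nat c).const_add 1).pow n
  filter_upwards [hlim.eventually_le_const (show (1 : ℝ) < 1 + δ by linarith),
    eventually_gt_atTop 0] with m hm hm0
  calc ((m : ℝ) + c) ^ n = (1 + c / m) ^ n * (m : ℝ) ^ n := by
        rw [← mul_pow]; field_simp
    _ ≤ (1 + δ) * (m : ℝ) ^ n := by gcongr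

theorem eventually_descFactorial_sq_le (n : ℕ) {δ : ℝ} (hδ : 0 < δ) :
    ∀ᶠ N : ℕ in atTop,
      ((N.descFactorial n : ℕ) : ℝ) ^ 2 ≤ (1 + δ) * N.descFactorial (n + n) := by
  have hshift := (tendsto_sub_atTop_nat (n + n)).eventually
    (eventually_add_pow_le ((n + n : ℕ) : ℝ) n hδ)
  filter_upwards [hshift, eventually_ge_atTop (n + n)] with N hN hNn
  have hsplit : N.descFactorial (n + n) = (N - n).descFactorial n * N.descFactorial n := by
    simpa using (Nat.descFactorial_mul_descFactorial (n := N) (Nat.le_add_left n n)).symm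
  have hupper : (N.descFactorial n : ℝ) ≤ (N - n).descFactorial n * (1 + δ) := by
    calc (N.descFactorial n : ℝ) ≤ (N : ℝ) ^ n := mod_cast Nat.descFactorial_le_pow N n
      _ = (((N - (n + n) : ℕ) : ℝ) + (n + n : ℕ)) ^ n := by
        rw [← Nat.cast_add, Nat.sub_add_cancel hNn]
      _ ≤ (1 + δ) * ((N - (n + n) : ℕ) : ℝ) ^ n := hN
      _ ≤ (N - n).descFactorial n * (1 + δ) := by
        rw [mul_comm]
        gcongr
        have hlow : (N - (n + n)) ^ n ≤ (N - n).descFactorial n :=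
          (Nat.pow_sub_le_descFactorial (N - n) n).trans' (Nat.pow_le_pow_left (by omega) n)
        exact_mod_cast hlow
  rw [hsplit, Nat.cast_mul, sq]
  nlinarith [Nat.cast_nonneg (α := ℝ) (N.descFactorial n)]

section Blocks

variable {k n : ℕ}

def blockEmb (k n : ℕ) (i : Fin k) : Fin n ↪ Fin (k * n) :=
  (Embedding.sectR i (Fin n)).trans finProdFinEquiv.toEmbedding

theorem disjoint_range_blockEmb {i j : Fin k} (hij : i ≠ j) :
    Disjoint (Set.range (blockEmb k n i)) (Set.range (blockEmb k n j)) := by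
  rw [Set.disjoint_left]
  rintro _ ⟨s, rfl⟩ ⟨t, hts⟩
  exact hij (congrArg Prod.fst (finProdFinEquiv.injective hts)).symm

def blockPairEmb {i j : Fin k} (hij : i ≠ j) : Fin n ⊕ Fin n ↪ Fin (k * n) :=
  Equiv.sumEmbeddingEquivProdEmbeddingDisjoint.symm
    ⟨(blockEmb k n i, blockEmb k n j), disjoint_range_blockEmb hij⟩

def oddIndicator {ι X : Type*} [Fintype ι] (a : X → ZMod 2) (u : ι ↪ X) : ℝ :=
  if ∑ j, a (u j) = 1 then 1 else 0

theorem oddIndicator_nonneg {ι X : Type*} [Fintype ι] (a : X → ZMod 2) :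
    0 ≤ oddIndicator (ι := ι) a := fun u => by
  unfold oddIndicator; split_ifs <;> norm_num

theorem groupParity_eq_oddIndicator (a : Fin (k * n) → ZMod 2) (i : Fin k) :
    groupParity k n a i = fun σ => oddIndicator a (σ • blockEmb k n i) := rfl

theorem permExp_groupParity (a : Fin (k * n) → ZMod 2) (i : Fin k) :
    permExp (k * n) (groupParity k n a i)
      = (∑ u : Fin n ↪ Fin (k * n), oddIndicator a u) / (k * n).descFactorial n := by
  rw [groupParity_eq_oddIndicator]
  simpa using permExp_comp_smul (oddIndicator a) (blockEmb k n i)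

theorem permExp_groupParity_mul_le (a : Fin (k * n) → ZMod 2) {i j : Fin k} (hij : i ≠ j) :
    permExp (k * n) (fun σ => groupParity k n a i σ * groupParity k n a j σ)
      ≤ (∑ u : Fin n ↪ Fin (k * n), oddIndicator a u) ^ 2
        / (k * n).descFactorial (n + n) := by
  have h := permExp_comp_smul
    (fun u => oddIndicator a (Embedding.inl.trans u) * oddIndicator a (Embedding.inr.trans u))
    (blockPairEmb (n := n) hij)
  simp only [Fintype.card_sum, Fintype.card_fin] at h
  -- the two halves of `blockPairEmb hij` are `blockEmb k n i` and `blockEmb k n j` by `rfl`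
  refine h.trans_le ?_
  rw [sq]
  gcongr
  exact sum_mul_sum_embedding_le (oddIndicator_nonneg a) (oddIndicator_nonneg a)

end Blocks

theorem parity_cov_le_general {n : ℕ} {δ : ℝ} (hδ : 0 < δ) :
    ∃ N' : ℕ, ∀ (k N₀ N₁ : ℕ), N₀ + N₁ = k * n → N' ≤ min N₀ N₁ →
      ∀ (a : Fin (k * n) → ZMod 2),
        (Finset.univ.filter fun x => a x = 0).card = N₀ →
        (Finset.univ.filter fun x => a x = 1).card = N₁ →
        ∀ (i j : Fin k), i ≠ j →
          parityCov k n a i j ≤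
            δ * (permExp (k * n) (groupParity k n a ⟨0, i.pos⟩)) ^ 2 := by
  obtain ⟨N', hN'⟩ := eventually_atTop.mp
    ((eventually_descFactorial_sq_le n hδ).and (eventually_ge_atTop (n + n)))
  refine ⟨N', fun k N₀ N₁ hsum hmin a _ _ i j hij => ?_⟩
  obtain ⟨hD, hN⟩ := hN' (k * n) (by omega)
  set S := ∑ u : Fin n ↪ Fin (k * n), oddIndicator a u
  set D₁ : ℝ := ↑((k * n).descFactorial n)
  set D₂ : ℝ := ↑((k * n).descFactorial (n + n))
  have hD₁ : 0 < D₁ := Nat.cast_pos.mpr (Nat.descFactorial_pos.mpr (by omega))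
  have hD₂ : 0 < D₂ := Nat.cast_pos.mpr (Nat.descFactorial_pos.mpr hN)
  have hpair : S ^ 2 / D₂ ≤ (1 + δ) * (S / D₁) ^ 2 := by
    rw [div_pow, ← mul_div_assoc, div_le_div_iff₀ hD₂ (by positivity)]
    linarith [mul_le_mul_of_nonneg_left hD (sq_nonneg S)]
  rw [parityCov, permExp_groupParity, permExp_groupParity, permExp_groupParity]
  linarith [permExp_groupParity_mul_le a hij]

/-- For `N₀ + N₁` bits with exactly `N₀` zeros and `N₁` ones partitioned uniformly at random
into `k = (N₀+N₁)/n` ordered groups of size `n`, and group parities `Yᵢ`:  for any `δ > 0`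
there is `N'` such that whenever `min {N₀, N₁} ≥ N'`, one has
`Cov[Yᵢ, Yⱼ] ≤ δ (E[Y₁])²` for all `i ≠ j`. -/
theorem parity_cov_le {n : ℕ} (hn : 1 ≤ n) {δ : ℝ} (hδ : 0 < δ) :
    ∃ N' : ℕ, ∀ (k N₀ N₁ : ℕ), N₀ + N₁ = k * n → N' ≤ min N₀ N₁ →
      ∀ (a : Fin (k * n) → ZMod 2),
        (Finset.univ.filter fun x => a x = 0).card = N₀ →
        (Finset.univ.filter fun x => a x = 1).card = N₁ →
        ∀ (i j : Fin k), i ≠ j →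
          parityCov k n a i j ≤
            δ * (permExp (k * n) (groupParity k n a ⟨0, i.pos⟩)) ^ 2 :=
  parity_cov_le_general hδ
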